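/- If E is an edge class of a finite simple graph G, then the set V(E) of vertices incident to at least one edge of E is a module of G. -/

import Mathlib

/-- A module (homogeneous set) of a simple graph. -/
def SimpleGraph.IsModuleSet {V : Type*} (G : SimpleGraph V) (M : Set V) : Prop :=
  ∀ v ∉ M, (∀ u ∈ M, G.Adj v u) ∨ (∀ u ∈ M, ¬ G.Adj v u)

/-- The basic step of Gallai's relation `∧` on edges. -/
def SimpleGraph.EdgeStep {V : Type*} (G : SimpleGraph V) (e f : Sym2 V) : Prop :=
  ∃ a b c, G.Adj a b ∧ G.Adj b c ∧ ¬ G.Adj a c ∧ e = s(a, b) ∧ f = s(b, c)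

/-- Two edges lie in the same edge class iff they are joined by a finite sequence of
edges in which consecutive edges are related by `∧`. -/
def SimpleGraph.SameEdgeClass {V : Type*} (G : SimpleGraph V) (e f : Sym2 V) : Prop :=
  Relation.ReflTransGen G.EdgeStep e f

/-!
Let `v` lie outside the vertex set `M` of the edge class of `e`. If `v` is adjacent to one
endpoint `a` of an edge `ab` of the class but not to `b`, then `ba ∧ av`, so `av` is in the class
and `v ∈ M`; hence `v` sees either both or neither endpoint of each edge of the class. Edges related
by `∧` share an endpoint, so "`v` sees both endpoints" spreads along the whole class.
-/

namespace SimpleGraph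

variable {V : Type*} {G : SimpleGraph V}

def edgeClassVerts (G : SimpleGraph V) (e : Sym2 V) : Set V :=
  {v | ∃ f ∈ G.edgeSet, G.SameEdgeClass e f ∧ v ∈ f}

instance : Std.Symm G.EdgeStep where
  symm := by
    rintro e f ⟨a, b, c, hab, hbc, hac, rfl, rfl⟩
    exact ⟨c, b, a, hbc.symm, hab.symm, fun h => hac h.symm, Sym2.eq_swap, Sym2.eq_swap⟩

lemma SameEdgeClass.symm {e f : Sym2 V} (h : G.SameEdgeClass e f) : G.SameEdgeClass f e :=
  Std.Symm.symm (r := Relation.ReflTransGen G.EdgeStep) _ _ h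

lemma SameEdgeClass.trans {e f g : Sym2 V} (hef : G.SameEdgeClass e f)
    (hfg : G.SameEdgeClass f g) : G.SameEdgeClass e g :=
  Relation.ReflTransGen.trans hef hfg

lemma adj_of_adj_of_notMem_edgeClassVerts {e : Sym2 V} {v a b : V}
    (hv : v ∉ G.edgeClassVerts e) (hab : G.Adj a b) (hcl : G.SameEdgeClass e s(a, b))
    (hva : G.Adj v a) : G.Adj v b := by
  by_contra hvb
  have hstep : G.EdgeStep s(a, b) s(a, v) :=
    ⟨b, a, v, hab.symm, hva.symm, fun h => hvb h.symm, Sym2.eq_swap, rfl⟩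
  exact hv ⟨s(a, v), G.mem_edgeSet.2 hva.symm, hcl.tail hstep, Sym2.mem_mk_right a v⟩

lemma forall_adj_of_adj_mem {e f : Sym2 V} {v u : V} (hv : v ∉ G.edgeClassVerts e)
    (hf : f ∈ G.edgeSet) (hcl : G.SameEdgeClass e f) (hu : u ∈ f) (hvu : G.Adj v u) :
    ∀ x ∈ f, G.Adj v x := by
  induction f using Sym2.ind with
  | h a b =>
    have hab : G.Adj a b := hf
    intro x hx
    rcases Sym2.mem_iff.1 hu with rfl | rfl <;> rcases Sym2.mem_iff.1 hx with rfl | rfl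
    · exact hvu
    · exact adj_of_adj_of_notMem_edgeClassVerts hv hab hcl hvu
    · exact adj_of_adj_of_notMem_edgeClassVerts hv hab.symm (Sym2.eq_swap ▸ hcl) hvu
    · exact hvu

lemma forall_adj_of_sameEdgeClass {e f g : Sym2 V} {v : V} (hv : v ∉ G.edgeClassVerts e)
    (hef : G.SameEdgeClass e f) (hfg : G.SameEdgeClass f g) (hadj : ∀ x ∈ f, G.Adj v x) :
    ∀ x ∈ g, G.Adj v x := by
  induction hfg with
  | refl => exact hadj
  | @tail g₁ g₂ hfg₁ hstep ih =>
    obtain ⟨a, b, c, hab, hbc, hac, rfl, rfl⟩ := hstep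
    exact forall_adj_of_adj_mem hv hbc (hef.trans (hfg₁.tail ⟨a, b, c, hab, hbc, hac, rfl, rfl⟩))
      (Sym2.mem_mk_left b c) (ih b (Sym2.mem_mk_right a b))

end SimpleGraph

theorem edgeClass_vertexSet_isModule_general {V : Type*} (G : SimpleGraph V)
    (e : Sym2 V) :
    G.IsModuleSet {v | ∃ f ∈ G.edgeSet, G.SameEdgeClass e f ∧ v ∈ f} := by
  intro v hv
  by_cases h : ∃ u ∈ G.edgeClassVerts e, G.Adj v u
  · obtain ⟨u, ⟨f, hf, hef, huf⟩, hvu⟩ := h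
    have hadj_f : ∀ x ∈ f, G.Adj v x := SimpleGraph.forall_adj_of_adj_mem hv hf hef huf hvu
    left
    rintro w ⟨g, -, heg, hwg⟩
    exact SimpleGraph.forall_adj_of_sameEdgeClass hv hef (hef.symm.trans heg) hadj_f w hwg
  · exact Or.inr fun u hu hvu => h ⟨u, hu, hvu⟩

/-- The vertices incident to an edge of the edge class of a given edge `e` form a module. -/
theorem edgeClass_vertexSet_isModule {V : Type*} [Fintype V] (G : SimpleGraph V)
    (e : Sym2 V) (he : e ∈ G.edgeSet) :
    G.IsModuleSet {v | ∃ f ∈ G.edgeSet, G.SameEdgeClass e f ∧ v ∈ f} :=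
  edgeClass_vertexSet_isModule_general G e
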